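/- The recursive splitting algorithm Split(C, D, f, H), which returns {C} if H(D) holds and otherwise quad-splits C and recurses on each quarter with the restricted data, terminates and returns a partition of C, provided the homogeneity condition H always holds on data sets with fewer than some fixed number N of elements and D is finite. -/

import Mathlib

open scoped Classical

/-- A half-open axis-aligned cell `[a,b) × [c,d)` given by the quadruple `(a,b,c,d)`. -/
abbrev QuadCell : Type := ℝ × ℝ × ℝ × ℝ

/-- The set of points of a cell. -/
def QuadCell.toSet (r : QuadCell) : Set (ℝ × ℝ) :=
  {p | r.1 ≤ p.1 ∧ p.1 < r.2.1 ∧ r.2.2.1 ≤ p.2 ∧ p.2 < r.2.2.2}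

/-- The `i`-th quarter of a cell under quad-tree splitting at the midpoints. -/
noncomputable def QuadCell.quarter (r : QuadCell) (i : Fin 4) : QuadCell :=
  let a := r.1; let b := r.2.1; let c := r.2.2.1; let d := r.2.2.2
  let mx := (a + b) / 2; let my := (c + d) / 2
  match i with
  | 0 => (a, mx, c, my)
  | 1 => (a, mx, my, d)
  | 2 => (mx, b, c, my)
  | 3 => (mx, b, my, d)

/-- `SplitSpec H C D L` holds when `L` is a possible (finite, terminating) result of
the recursive algorithm `Split(C, D, f, H)`: return `[C]` if the homogeneity condition
`H` holds of the data `D` in `C`, and otherwise quad-split `C` and recurse on each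
quarter with the data falling in that quarter.  (The data set is modelled as a finite
set of points of the plane, i.e. `f` is injective.) -/
inductive SplitSpec (H : Finset (ℝ × ℝ) → Prop) :
    QuadCell → Finset (ℝ × ℝ) → List QuadCell → Prop
  | homog {C : QuadCell} {D : Finset (ℝ × ℝ)} : H D → SplitSpec H C D [C]
  | split {C : QuadCell} {D : Finset (ℝ × ℝ)} {L : Fin 4 → List QuadCell} :
      ¬ H D →
      (∀ i : Fin 4,
        SplitSpec H (C.quarter i)
          (D.filter (fun p => p ∈ (C.quarter i).toSet)) (L i)) →
      SplitSpec H C D (L 0 ++ L 1 ++ L 2 ++ L 3)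

/-!
The finitely many data points are pairwise at distance at least some `δ > 0`. After `k`
quad-splits with `2⁻ᵏ · size C ≤ δ` every cell holds at most one datum, where `H` holds
because `N ≥ 2`; so every branch of the recursion stops by depth `k`. Since the quarters of a
cell partition it, the leaves partition `C`.
-/

open Function

def IsTiling {α β : Type*} (f : α → Set β) (L : List α) (S : Set β) : Prop :=
  (⋃ r ∈ L, f r) = S ∧ L.Pairwise (Disjoint on f)

lemma isTiling_singleton {α β : Type*} (f : α → Set β) (a : α) : IsTiling f [a] (f a) := by
  simp [IsTiling]

lemma IsTiling.flatten_ofFn {α β : Type*} {f : α → Set β} {n : ℕ} {L : Fin n → List α}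
    {S : Fin n → Set β} (hL : ∀ i, IsTiling f (L i) (S i)) (hS : Pairwise (Disjoint on S)) :
    IsTiling f (List.ofFn L).flatten (⋃ i, S i) := by
  have hsub : ∀ i, ∀ r ∈ L i, f r ⊆ S i := fun i r hr =>
    (hL i).1 ▸ Set.subset_biUnion_of_mem (u := f) hr
  refine ⟨?_, List.pairwise_flatten.2 ⟨?_, List.pairwise_ofFn.2 ?_⟩⟩
  · ext x
    simp only [← (hL _).1, Set.mem_iUnion, List.mem_flatten, List.mem_ofFn, exists_prop]
    exact ⟨fun ⟨r, ⟨_, ⟨i, rfl⟩, hr⟩, hx⟩ => ⟨i, r, hr, hx⟩,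
      fun ⟨i, r, hr, hx⟩ => ⟨r, ⟨_, ⟨i, rfl⟩, hr⟩, hx⟩⟩
  · simp only [List.mem_ofFn]
    rintro _ ⟨i, rfl⟩
    exact (hL i).2
  · intro i j hij r hr r' hr'
    exact (hS hij.ne).mono (hsub i r hr) (hsub j r' hr')

lemma Finset.card_le_one_of_forall_dist_lt {X : Type*} [MetricSpace X] {D : Finset X} {δ : ℝ}
    (hsep : ∀ p ∈ D, ∀ q ∈ D, p ≠ q → δ ≤ dist p q) (hdiam : ∀ p ∈ D, ∀ q ∈ D, dist p q < δ) :
    D.card ≤ 1 :=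
  Finset.card_le_one.2 fun p hp q hq =>
    by_contra fun hpq => (hsep p hp q hq hpq).not_gt (hdiam p hp q hq)

lemma Finset.exists_pos_le_dist {X : Type*} [MetricSpace X] (D : Finset X) :
    ∃ δ > 0, ∀ p ∈ D, ∀ q ∈ D, p ≠ q → δ ≤ dist p q := by
  -- `1` keeps `dists` nonempty when `D` has fewer than two points.
  set dists := insert 1 (D.offDiag.image fun z => dist z.1 z.2)
  refine ⟨dists.min' (Finset.insert_nonempty _ _), ?_, fun p hp q hq hpq => ?_⟩
  · refine (Finset.lt_min'_iff _ _).2 fun r hr => ?_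
    rcases Finset.mem_insert.1 hr with rfl | hr
    · exact one_pos
    obtain ⟨z, hz, rfl⟩ := Finset.mem_image.1 hr
    exact dist_pos.2 (Finset.mem_offDiag.1 hz).2.2
  · have hpq' : (p, q) ∈ D.offDiag := Finset.mem_offDiag.2 ⟨hp, hq, hpq⟩
    exact Finset.min'_le _ _ (Finset.mem_insert_of_mem (Finset.mem_image_of_mem _ hpq'))

namespace QuadCell

def size (C : QuadCell) : ℝ := max (C.2.1 - C.1) (C.2.2.2 - C.2.2.1)

lemma dist_lt_size {C : QuadCell} {p q : ℝ × ℝ} (hp : p ∈ C.toSet) (hq : q ∈ C.toSet) :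
    dist p q < C.size := by
  obtain ⟨hp₁, hp₂, hp₃, hp₄⟩ := hp
  obtain ⟨hq₁, hq₂, hq₃, hq₄⟩ := hq
  rw [Prod.dist_eq, Real.dist_eq, Real.dist_eq]
  exact max_lt_max (abs_sub_lt_iff.2 ⟨by linarith, by linarith⟩)
    (abs_sub_lt_iff.2 ⟨by linarith, by linarith⟩)

lemma size_quarter (C : QuadCell) (i : Fin 4) : (C.quarter i).size = C.size / 2 := by
  rw [size, size, ← max_div_div_right zero_le_two]
  fin_cases i <;> simp only [quarter] <;> ring_nf

lemma iUnion_quarter (C : QuadCell) : ⋃ i, (C.quarter i).toSet = C.toSet := by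
  obtain ⟨a, b, c, d⟩ := C
  refine Set.Subset.antisymm (Set.iUnion_subset fun i p hp => ?_) fun p hp => ?_
  · obtain ⟨h₁, h₂, h₃, h₄⟩ := hp
    fin_cases i <;> simp only [quarter] at * <;>
      exact ⟨by linarith, by linarith, by linarith, by linarith⟩
  · obtain ⟨h₁, h₂, h₃, h₄⟩ := hp
    rw [Set.mem_iUnion]
    rcases lt_or_ge p.1 ((a + b) / 2) with hx | hx <;>
      rcases lt_or_ge p.2 ((c + d) / 2) with hy | hy
    exacts [⟨0, h₁, hx, h₃, hy⟩, ⟨1, h₁, hx, hy, h₄⟩, ⟨2, hx, h₂, h₃, hy⟩, ⟨3, hx, h₂, hy, h₄⟩]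

lemma pairwise_disjoint_quarter (C : QuadCell) :
    Pairwise (Disjoint on fun i => (C.quarter i).toSet) := by
  obtain ⟨a, b, c, d⟩ := C
  intro i j hij
  rw [onFun, Set.disjoint_left]
  rintro p ⟨h₁, h₂, h₃, h₄⟩ ⟨h₅, h₆, h₇, h₈⟩
  fin_cases i <;> fin_cases j <;> simp_all [quarter] <;> linarith

end QuadCell

section Split

variable {H : Finset (ℝ × ℝ) → Prop} {C : QuadCell} {D : Finset (ℝ × ℝ)}

def SplitPartitions (H : Finset (ℝ × ℝ) → Prop) (C : QuadCell) (D : Finset (ℝ × ℝ)) : Prop :=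
  ∃ L, SplitSpec H C D L ∧ IsTiling QuadCell.toSet L C.toSet

lemma splitPartitions_of_homog (hD : H D) : SplitPartitions H C D :=
  ⟨[C], .homog hD, isTiling_singleton _ _⟩

lemma splitPartitions_of_quarters (hD : ¬ H D)
    (h : ∀ i, SplitPartitions H (C.quarter i) (D.filter (fun p => p ∈ (C.quarter i).toSet))) :
    SplitPartitions H C D := by
  choose L hspec htile using h
  have happend : L 0 ++ L 1 ++ L 2 ++ L 3 = (List.ofFn L).flatten := by simp [List.ofFn_succ]
  refine ⟨_, .split hD hspec, ?_⟩
  rw [happend, ← C.iUnion_quarter]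
  exact IsTiling.flatten_ofFn htile C.pairwise_disjoint_quarter

theorem splitPartitions_of_size_le (hH : ∀ D : Finset (ℝ × ℝ), D.card ≤ 1 → H D) {δ : ℝ}
    (hsep : ∀ p ∈ D, ∀ q ∈ D, p ≠ q → δ ≤ dist p q) (k : ℕ) (hC : C.size ≤ 2 ^ k * δ)
    (hD : ∀ p ∈ D, p ∈ C.toSet) : SplitPartitions H C D := by
  induction k generalizing C D with
  | zero =>
    rw [pow_zero, one_mul] at hC
    exact splitPartitions_of_homog <| hH D <| D.card_le_one_of_forall_dist_lt hsep
      fun p hp q hq => (QuadCell.dist_lt_size (hD p hp) (hD q hq)).trans_le hC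
  | succ k ih =>
    by_cases hHD : H D
    · exact splitPartitions_of_homog hHD
    refine splitPartitions_of_quarters hHD fun i => ih (fun p hp q hq => ?_) ?_ fun p hp => ?_
    · exact hsep p (Finset.mem_filter.1 hp).1 q (Finset.mem_filter.1 hq).1
    · rw [C.size_quarter, div_le_iff₀ two_pos, mul_right_comm, ← pow_succ]
      exact hC
    · exact (Finset.mem_filter.1 hp).2

end Split

theorem split_terminates_and_partitions_general
    (N : ℕ) (hN : 2 ≤ N) (H : Finset (ℝ × ℝ) → Prop)
    (hH : ∀ D : Finset (ℝ × ℝ), D.card < N → H D)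
    (C : QuadCell)
    (D : Finset (ℝ × ℝ)) (hD : ∀ p ∈ D, p ∈ C.toSet) :
    ∃ L : List QuadCell, SplitSpec H C D L ∧
      (⋃ r ∈ L, QuadCell.toSet r) = C.toSet ∧
      L.Pairwise (fun r r' => Disjoint (QuadCell.toSet r) (QuadCell.toSet r')) := by
  obtain ⟨δ, hδ, hsep⟩ := D.exists_pos_le_dist
  obtain ⟨k, hk⟩ := pow_unbounded_of_one_lt (C.size / δ) one_lt_two
  exact splitPartitions_of_size_le (fun D' hD' => hH D' (by omega)) hsep k
    ((div_lt_iff₀ hδ).1 hk).le hD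

/-- The recursive splitting algorithm terminates and returns a partition of `C`,
provided the homogeneity condition `H` holds of every data set with fewer than `N`
elements (`N ≥ 2`), the cell is non-degenerate, and the (finite) data lie in `C`. -/
theorem split_terminates_and_partitions
    (N : ℕ) (hN : 2 ≤ N) (H : Finset (ℝ × ℝ) → Prop)
    (hH : ∀ D : Finset (ℝ × ℝ), D.card < N → H D)
    (C : QuadCell) (hab : C.1 < C.2.1) (hcd : C.2.2.1 < C.2.2.2)
    (D : Finset (ℝ × ℝ)) (hD : ∀ p ∈ D, p ∈ C.toSet) :
    ∃ L : List QuadCell, SplitSpec H C D L ∧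
      (⋃ r ∈ L, QuadCell.toSet r) = C.toSet ∧
      L.Pairwise (fun r r' => Disjoint (QuadCell.toSet r) (QuadCell.toSet r')) :=
  split_terminates_and_partitions_general N hN H hH C D hD
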